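/- Let K be a field of characteristic zero and n ≥ 2. The 2-complex 𝒜 on {1,…,6} consisting of the twelve 2-simplices {1,1,2},{1,1,3},{1,2,4},{1,2,5},{1,3,5},{1,3,6},{1,4,5},{1,5,6},{2,3,4},{2,3,6},{2,5,6},{3,4,5} has a one-dimensional space of K-balancings, spanned by the nondegenerate balancing assigning weights 1,−1,−1,−1,1,1,1,−1,1,−1,1,−1 respectively (in the order listed). In particular, 𝒜 is minimal. -/
import Mathlib


open scoped BigOperators

/-- The multiplicity `m(T ⊆ σ) = ∏ i, C(σ i, T i)` of a multiset `T` in a multiset `σ`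
on `{1,…,6}` (multisets encoded as functions `Fin 6 → ℕ`). -/
def mult (T σ : Fin 6 → ℕ) : ℕ := ∏ i, (σ i).choose (T i)

/-- The singular `2`-complex `𝒜` on `{1,…,6}` with twelve `2`-simplices
`{1,1,2},{1,1,3},{1,2,4},{1,2,5},{1,3,5},{1,3,6},{1,4,5},{1,5,6},{2,3,4},{2,3,6},
{2,5,6},{3,4,5}` (vertex `i` corresponds to index `i − 1`). -/
def complexA : Finset (Fin 6 → ℕ) :=
  { ![2, 1, 0, 0, 0, 0], ![2, 0, 1, 0, 0, 0], ![1, 1, 0, 1, 0, 0],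
    ![1, 1, 0, 0, 1, 0], ![1, 0, 1, 0, 1, 0], ![1, 0, 1, 0, 0, 1],
    ![1, 0, 0, 1, 1, 0], ![1, 0, 0, 0, 1, 1], ![0, 1, 1, 1, 0, 0],
    ![0, 1, 1, 0, 0, 1], ![0, 1, 0, 0, 1, 1], ![0, 0, 1, 1, 1, 0] }

/-- The weighting on `𝒜` with weights `1,−1,−1,−1,1,1,1,−1,1,−1,1,−1` on the twelve
simplices in the order listed. -/
def w₀ (K : Type*) [Field K] : (Fin 6 → ℕ) → K := fun σ =>
  if σ = ![2, 1, 0, 0, 0, 0] then 1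
  else if σ = ![2, 0, 1, 0, 0, 0] then -1
  else if σ = ![1, 1, 0, 1, 0, 0] then -1
  else if σ = ![1, 1, 0, 0, 1, 0] then -1
  else if σ = ![1, 0, 1, 0, 1, 0] then 1
  else if σ = ![1, 0, 1, 0, 0, 1] then 1
  else if σ = ![1, 0, 0, 1, 1, 0] then 1
  else if σ = ![1, 0, 0, 0, 1, 1] then -1
  else if σ = ![0, 1, 1, 1, 0, 0] then 1
  else if σ = ![0, 1, 1, 0, 0, 1] then -1
  else if σ = ![0, 1, 0, 0, 1, 1] then 1
  else if σ = ![0, 0, 1, 1, 1, 0] then -1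
  else 0

def w₀ℤ : (Fin 6 → ℕ) → ℤ := fun σ =>
  if σ = ![2, 1, 0, 0, 0, 0] then 1
  else if σ = ![2, 0, 1, 0, 0, 0] then -1
  else if σ = ![1, 1, 0, 1, 0, 0] then -1
  else if σ = ![1, 1, 0, 0, 1, 0] then -1
  else if σ = ![1, 0, 1, 0, 1, 0] then 1
  else if σ = ![1, 0, 1, 0, 0, 1] then 1
  else if σ = ![1, 0, 0, 1, 1, 0] then 1
  else if σ = ![1, 0, 0, 0, 1, 1] then -1
  else if σ = ![0, 1, 1, 1, 0, 0] then 1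
  else if σ = ![0, 1, 1, 0, 0, 1] then -1
  else if σ = ![0, 1, 0, 0, 1, 1] then 1
  else if σ = ![0, 0, 1, 1, 1, 0] then -1
  else 0



set_option maxHeartbeats 1000000 in
lemma key_balance : ∀ a b c d e f : ℕ, a + b + c + d + e + f ≤ 2 →
    ∑ σ ∈ complexA, w₀ℤ σ * (mult ![a, b, c, d, e, f] σ : ℤ) = 0 := by
  intro a b c d e f h
  have ha : a ≤ 2 := by omega
  have hb : b ≤ 2 := by omega
  have hc : c ≤ 2 := by omega
  have hd : d ≤ 2 := by omega
  have he : e ≤ 2 := by omega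
  have hf : f ≤ 2 := by omega
  interval_cases a <;> interval_cases b <;> interval_cases c <;> interval_cases d <;>
    interval_cases e <;> interval_cases f <;> first | omega | decide


lemma sum_expand {M : Type*} [AddCommMonoid M] (f : (Fin 6 → ℕ) → M) :
    ∑ σ ∈ complexA, f σ =
      f ![2, 1, 0, 0, 0, 0] +
      f ![2, 0, 1, 0, 0, 0] +
      f ![1, 1, 0, 1, 0, 0] +
      f ![1, 1, 0, 0, 1, 0] +
      f ![1, 0, 1, 0, 1, 0] +
      f ![1, 0, 1, 0, 0, 1] +
      f ![1, 0, 0, 1, 1, 0] +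
      f ![1, 0, 0, 0, 1, 1] +
      f ![0, 1, 1, 1, 0, 0] +
      f ![0, 1, 1, 0, 0, 1] +
      f ![0, 1, 0, 0, 1, 1] +
      f ![0, 0, 1, 1, 1, 0] := by
  rw [complexA]
  repeat rw [Finset.sum_insert (by decide)]
  rw [Finset.sum_singleton]
  abel


lemma w0eval1 (K : Type*) [Field K] : w₀ K ![2, 1, 0, 0, 0, 0] = 1 := by
  simp only [w₀]
  simp


lemma w0eval2 (K : Type*) [Field K] : w₀ K ![2, 0, 1, 0, 0, 0] = (-1) := by
  simp only [w₀]
  rw [if_neg (by decide)]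
  simp


lemma w0eval3 (K : Type*) [Field K] : w₀ K ![1, 1, 0, 1, 0, 0] = (-1) := by
  simp only [w₀]
  rw [if_neg (by decide), if_neg (by decide)]
  simp


lemma w0eval4 (K : Type*) [Field K] : w₀ K ![1, 1, 0, 0, 1, 0] = (-1) := by
  simp only [w₀]
  rw [if_neg (by decide), if_neg (by decide), if_neg (by decide)]
  simp


lemma w0eval5 (K : Type*) [Field K] : w₀ K ![1, 0, 1, 0, 1, 0] = 1 := by
  simp only [w₀]
  rw [if_neg (by decide), if_neg (by decide), if_neg (by decide), if_neg (by decide)]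
  simp


lemma w0eval6 (K : Type*) [Field K] : w₀ K ![1, 0, 1, 0, 0, 1] = 1 := by
  simp only [w₀]
  rw [if_neg (by decide), if_neg (by decide), if_neg (by decide), if_neg (by decide), if_neg (by decide)]
  simp


lemma w0eval7 (K : Type*) [Field K] : w₀ K ![1, 0, 0, 1, 1, 0] = 1 := by
  simp only [w₀]
  rw [if_neg (by decide), if_neg (by decide), if_neg (by decide), if_neg (by decide), if_neg (by decide), if_neg (by decide)]
  simp


lemma w0eval8 (K : Type*) [Field K] : w₀ K ![1, 0, 0, 0, 1, 1] = (-1) := by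
  simp only [w₀]
  rw [if_neg (by decide), if_neg (by decide), if_neg (by decide), if_neg (by decide), if_neg (by decide), if_neg (by decide), if_neg (by decide)]
  simp


lemma w0eval9 (K : Type*) [Field K] : w₀ K ![0, 1, 1, 1, 0, 0] = 1 := by
  simp only [w₀]
  rw [if_neg (by decide), if_neg (by decide), if_neg (by decide), if_neg (by decide), if_neg (by decide), if_neg (by decide), if_neg (by decide), if_neg (by decide)]
  simp


lemma w0eval10 (K : Type*) [Field K] : w₀ K ![0, 1, 1, 0, 0, 1] = (-1) := by
  simp only [w₀]
  rw [if_neg (by decide), if_neg (by decide), if_neg (by decide), if_neg (by decide), if_neg (by decide), if_neg (by decide), if_neg (by decide), if_neg (by decide), if_neg (by decide)]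
  simp


lemma w0eval11 (K : Type*) [Field K] : w₀ K ![0, 1, 0, 0, 1, 1] = 1 := by
  simp only [w₀]
  rw [if_neg (by decide), if_neg (by decide), if_neg (by decide), if_neg (by decide), if_neg (by decide), if_neg (by decide), if_neg (by decide), if_neg (by decide), if_neg (by decide), if_neg (by decide)]
  simp


lemma w0eval12 (K : Type*) [Field K] : w₀ K ![0, 0, 1, 1, 1, 0] = (-1) := by
  simp only [w₀]
  rw [if_neg (by decide), if_neg (by decide), if_neg (by decide), if_neg (by decide), if_neg (by decide), if_neg (by decide), if_neg (by decide), if_neg (by decide), if_neg (by decide), if_neg (by decide), if_neg (by decide)]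
  simp


lemma mem_complexA_iff (σ : Fin 6 → ℕ) : σ ∈ complexA ↔
    σ = ![2, 1, 0, 0, 0, 0] ∨
    σ = ![2, 0, 1, 0, 0, 0] ∨
    σ = ![1, 1, 0, 1, 0, 0] ∨
    σ = ![1, 1, 0, 0, 1, 0] ∨
    σ = ![1, 0, 1, 0, 1, 0] ∨
    σ = ![1, 0, 1, 0, 0, 1] ∨
    σ = ![1, 0, 0, 1, 1, 0] ∨
    σ = ![1, 0, 0, 0, 1, 1] ∨
    σ = ![0, 1, 1, 1, 0, 0] ∨
    σ = ![0, 1, 1, 0, 0, 1] ∨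
    σ = ![0, 1, 0, 0, 1, 1] ∨
    σ = ![0, 0, 1, 1, 1, 0] := by
  simp [complexA, Finset.mem_insert, Finset.mem_singleton]

lemma zeval1 : w₀ℤ ![2, 1, 0, 0, 0, 0] = 1 := by decide
lemma zeval2 : w₀ℤ ![2, 0, 1, 0, 0, 0] = (-1) := by decide
lemma zeval3 : w₀ℤ ![1, 1, 0, 1, 0, 0] = (-1) := by decide
lemma zeval4 : w₀ℤ ![1, 1, 0, 0, 1, 0] = (-1) := by decide
lemma zeval5 : w₀ℤ ![1, 0, 1, 0, 1, 0] = 1 := by decide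
lemma zeval6 : w₀ℤ ![1, 0, 1, 0, 0, 1] = 1 := by decide
lemma zeval7 : w₀ℤ ![1, 0, 0, 1, 1, 0] = 1 := by decide
lemma zeval8 : w₀ℤ ![1, 0, 0, 0, 1, 1] = (-1) := by decide
lemma zeval9 : w₀ℤ ![0, 1, 1, 1, 0, 0] = 1 := by decide
lemma zeval10 : w₀ℤ ![0, 1, 1, 0, 0, 1] = (-1) := by decide
lemma zeval11 : w₀ℤ ![0, 1, 0, 0, 1, 1] = 1 := by decide
lemma zeval12 : w₀ℤ ![0, 0, 1, 1, 1, 0] = (-1) := by decide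

lemma w₀_cast (K : Type*) [Field K] : ∀ σ ∈ complexA, ((w₀ℤ σ : ℤ) : K) = w₀ K σ := by
  intro σ hσ
  rw [mem_complexA_iff] at hσ
  rcases hσ with rfl|rfl|rfl|rfl|rfl|rfl|rfl|rfl|rfl|rfl|rfl|rfl <;>
    simp only [zeval1, zeval2, zeval3, zeval4, zeval5, zeval6, zeval7, zeval8, zeval9, zeval10, zeval11, zeval12,
      w0eval1, w0eval2, w0eval3, w0eval4, w0eval5, w0eval6, w0eval7, w0eval8, w0eval9, w0eval10, w0eval11, w0eval12] <;> norm_num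


lemma main_span (K : Type*) [Field K] [CharZero K] (w : (Fin 6 → ℕ) → K)
    (hw : ∀ S : Fin 6 → ℕ, ∑ i, S i ≤ 2 →
      ∑ σ ∈ complexA, w σ * (mult S σ : K) = 0) :
    ∃ c : K, ∀ σ ∈ complexA, w σ = c * w₀ K σ := by
  have h1 := hw ![0, 0, 0, 0, 0, 1] (by decide)
  have h2 := hw ![0, 0, 0, 0, 1, 0] (by decide)
  have h3 := hw ![0, 0, 0, 0, 1, 1] (by decide)
  have h4 := hw ![0, 0, 0, 1, 0, 0] (by decide)
  have h5 := hw ![0, 0, 0, 1, 1, 0] (by decide)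
  have h6 := hw ![0, 0, 1, 0, 0, 0] (by decide)
  have h7 := hw ![0, 0, 1, 0, 1, 0] (by decide)
  have h8 := hw ![0, 0, 1, 1, 0, 0] (by decide)
  have h9 := hw ![0, 1, 0, 0, 0, 0] (by decide)
  have h10 := hw ![0, 1, 0, 0, 0, 1] (by decide)
  have h11 := hw ![0, 1, 0, 0, 1, 0] (by decide)
  rw [sum_expand] at h1 h2 h3 h4 h5 h6 h7 h8 h9 h10 h11
  simp only [show mult ![0, 0, 0, 0, 0, 1] ![2, 1, 0, 0, 0, 0] = 0 from by decide,
    show mult ![0, 0, 0, 0, 0, 1] ![2, 0, 1, 0, 0, 0] = 0 from by decide,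
    show mult ![0, 0, 0, 0, 0, 1] ![1, 1, 0, 1, 0, 0] = 0 from by decide,
    show mult ![0, 0, 0, 0, 0, 1] ![1, 1, 0, 0, 1, 0] = 0 from by decide,
    show mult ![0, 0, 0, 0, 0, 1] ![1, 0, 1, 0, 1, 0] = 0 from by decide,
    show mult ![0, 0, 0, 0, 0, 1] ![1, 0, 1, 0, 0, 1] = 1 from by decide,
    show mult ![0, 0, 0, 0, 0, 1] ![1, 0, 0, 1, 1, 0] = 0 from by decide,
    show mult ![0, 0, 0, 0, 0, 1] ![1, 0, 0, 0, 1, 1] = 1 from by decide,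
    show mult ![0, 0, 0, 0, 0, 1] ![0, 1, 1, 1, 0, 0] = 0 from by decide,
    show mult ![0, 0, 0, 0, 0, 1] ![0, 1, 1, 0, 0, 1] = 1 from by decide,
    show mult ![0, 0, 0, 0, 0, 1] ![0, 1, 0, 0, 1, 1] = 1 from by decide,
    show mult ![0, 0, 0, 0, 0, 1] ![0, 0, 1, 1, 1, 0] = 0 from by decide,
    show mult ![0, 0, 0, 0, 1, 0] ![2, 1, 0, 0, 0, 0] = 0 from by decide,
    show mult ![0, 0, 0, 0, 1, 0] ![2, 0, 1, 0, 0, 0] = 0 from by decide,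
    show mult ![0, 0, 0, 0, 1, 0] ![1, 1, 0, 1, 0, 0] = 0 from by decide,
    show mult ![0, 0, 0, 0, 1, 0] ![1, 1, 0, 0, 1, 0] = 1 from by decide,
    show mult ![0, 0, 0, 0, 1, 0] ![1, 0, 1, 0, 1, 0] = 1 from by decide,
    show mult ![0, 0, 0, 0, 1, 0] ![1, 0, 1, 0, 0, 1] = 0 from by decide,
    show mult ![0, 0, 0, 0, 1, 0] ![1, 0, 0, 1, 1, 0] = 1 from by decide,
    show mult ![0, 0, 0, 0, 1, 0] ![1, 0, 0, 0, 1, 1] = 1 from by decide,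
    show mult ![0, 0, 0, 0, 1, 0] ![0, 1, 1, 1, 0, 0] = 0 from by decide,
    show mult ![0, 0, 0, 0, 1, 0] ![0, 1, 1, 0, 0, 1] = 0 from by decide,
    show mult ![0, 0, 0, 0, 1, 0] ![0, 1, 0, 0, 1, 1] = 1 from by decide,
    show mult ![0, 0, 0, 0, 1, 0] ![0, 0, 1, 1, 1, 0] = 1 from by decide,
    show mult ![0, 0, 0, 0, 1, 1] ![2, 1, 0, 0, 0, 0] = 0 from by decide,
    show mult ![0, 0, 0, 0, 1, 1] ![2, 0, 1, 0, 0, 0] = 0 from by decide,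
    show mult ![0, 0, 0, 0, 1, 1] ![1, 1, 0, 1, 0, 0] = 0 from by decide,
    show mult ![0, 0, 0, 0, 1, 1] ![1, 1, 0, 0, 1, 0] = 0 from by decide,
    show mult ![0, 0, 0, 0, 1, 1] ![1, 0, 1, 0, 1, 0] = 0 from by decide,
    show mult ![0, 0, 0, 0, 1, 1] ![1, 0, 1, 0, 0, 1] = 0 from by decide,
    show mult ![0, 0, 0, 0, 1, 1] ![1, 0, 0, 1, 1, 0] = 0 from by decide,
    show mult ![0, 0, 0, 0, 1, 1] ![1, 0, 0, 0, 1, 1] = 1 from by decide,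
    show mult ![0, 0, 0, 0, 1, 1] ![0, 1, 1, 1, 0, 0] = 0 from by decide,
    show mult ![0, 0, 0, 0, 1, 1] ![0, 1, 1, 0, 0, 1] = 0 from by decide,
    show mult ![0, 0, 0, 0, 1, 1] ![0, 1, 0, 0, 1, 1] = 1 from by decide,
    show mult ![0, 0, 0, 0, 1, 1] ![0, 0, 1, 1, 1, 0] = 0 from by decide,
    show mult ![0, 0, 0, 1, 0, 0] ![2, 1, 0, 0, 0, 0] = 0 from by decide,
    show mult ![0, 0, 0, 1, 0, 0] ![2, 0, 1, 0, 0, 0] = 0 from by decide,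
    show mult ![0, 0, 0, 1, 0, 0] ![1, 1, 0, 1, 0, 0] = 1 from by decide,
    show mult ![0, 0, 0, 1, 0, 0] ![1, 1, 0, 0, 1, 0] = 0 from by decide,
    show mult ![0, 0, 0, 1, 0, 0] ![1, 0, 1, 0, 1, 0] = 0 from by decide,
    show mult ![0, 0, 0, 1, 0, 0] ![1, 0, 1, 0, 0, 1] = 0 from by decide,
    show mult ![0, 0, 0, 1, 0, 0] ![1, 0, 0, 1, 1, 0] = 1 from by decide,
    show mult ![0, 0, 0, 1, 0, 0] ![1, 0, 0, 0, 1, 1] = 0 from by decide,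
    show mult ![0, 0, 0, 1, 0, 0] ![0, 1, 1, 1, 0, 0] = 1 from by decide,
    show mult ![0, 0, 0, 1, 0, 0] ![0, 1, 1, 0, 0, 1] = 0 from by decide,
    show mult ![0, 0, 0, 1, 0, 0] ![0, 1, 0, 0, 1, 1] = 0 from by decide,
    show mult ![0, 0, 0, 1, 0, 0] ![0, 0, 1, 1, 1, 0] = 1 from by decide,
    show mult ![0, 0, 0, 1, 1, 0] ![2, 1, 0, 0, 0, 0] = 0 from by decide,
    show mult ![0, 0, 0, 1, 1, 0] ![2, 0, 1, 0, 0, 0] = 0 from by decide,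
    show mult ![0, 0, 0, 1, 1, 0] ![1, 1, 0, 1, 0, 0] = 0 from by decide,
    show mult ![0, 0, 0, 1, 1, 0] ![1, 1, 0, 0, 1, 0] = 0 from by decide,
    show mult ![0, 0, 0, 1, 1, 0] ![1, 0, 1, 0, 1, 0] = 0 from by decide,
    show mult ![0, 0, 0, 1, 1, 0] ![1, 0, 1, 0, 0, 1] = 0 from by decide,
    show mult ![0, 0, 0, 1, 1, 0] ![1, 0, 0, 1, 1, 0] = 1 from by decide,
    show mult ![0, 0, 0, 1, 1, 0] ![1, 0, 0, 0, 1, 1] = 0 from by decide,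
    show mult ![0, 0, 0, 1, 1, 0] ![0, 1, 1, 1, 0, 0] = 0 from by decide,
    show mult ![0, 0, 0, 1, 1, 0] ![0, 1, 1, 0, 0, 1] = 0 from by decide,
    show mult ![0, 0, 0, 1, 1, 0] ![0, 1, 0, 0, 1, 1] = 0 from by decide,
    show mult ![0, 0, 0, 1, 1, 0] ![0, 0, 1, 1, 1, 0] = 1 from by decide,
    show mult ![0, 0, 1, 0, 0, 0] ![2, 1, 0, 0, 0, 0] = 0 from by decide,
    show mult ![0, 0, 1, 0, 0, 0] ![2, 0, 1, 0, 0, 0] = 1 from by decide,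
    show mult ![0, 0, 1, 0, 0, 0] ![1, 1, 0, 1, 0, 0] = 0 from by decide,
    show mult ![0, 0, 1, 0, 0, 0] ![1, 1, 0, 0, 1, 0] = 0 from by decide,
    show mult ![0, 0, 1, 0, 0, 0] ![1, 0, 1, 0, 1, 0] = 1 from by decide,
    show mult ![0, 0, 1, 0, 0, 0] ![1, 0, 1, 0, 0, 1] = 1 from by decide,
    show mult ![0, 0, 1, 0, 0, 0] ![1, 0, 0, 1, 1, 0] = 0 from by decide,
    show mult ![0, 0, 1, 0, 0, 0] ![1, 0, 0, 0, 1, 1] = 0 from by decide,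
    show mult ![0, 0, 1, 0, 0, 0] ![0, 1, 1, 1, 0, 0] = 1 from by decide,
    show mult ![0, 0, 1, 0, 0, 0] ![0, 1, 1, 0, 0, 1] = 1 from by decide,
    show mult ![0, 0, 1, 0, 0, 0] ![0, 1, 0, 0, 1, 1] = 0 from by decide,
    show mult ![0, 0, 1, 0, 0, 0] ![0, 0, 1, 1, 1, 0] = 1 from by decide,
    show mult ![0, 0, 1, 0, 1, 0] ![2, 1, 0, 0, 0, 0] = 0 from by decide,
    show mult ![0, 0, 1, 0, 1, 0] ![2, 0, 1, 0, 0, 0] = 0 from by decide,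
    show mult ![0, 0, 1, 0, 1, 0] ![1, 1, 0, 1, 0, 0] = 0 from by decide,
    show mult ![0, 0, 1, 0, 1, 0] ![1, 1, 0, 0, 1, 0] = 0 from by decide,
    show mult ![0, 0, 1, 0, 1, 0] ![1, 0, 1, 0, 1, 0] = 1 from by decide,
    show mult ![0, 0, 1, 0, 1, 0] ![1, 0, 1, 0, 0, 1] = 0 from by decide,
    show mult ![0, 0, 1, 0, 1, 0] ![1, 0, 0, 1, 1, 0] = 0 from by decide,
    show mult ![0, 0, 1, 0, 1, 0] ![1, 0, 0, 0, 1, 1] = 0 from by decide,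
    show mult ![0, 0, 1, 0, 1, 0] ![0, 1, 1, 1, 0, 0] = 0 from by decide,
    show mult ![0, 0, 1, 0, 1, 0] ![0, 1, 1, 0, 0, 1] = 0 from by decide,
    show mult ![0, 0, 1, 0, 1, 0] ![0, 1, 0, 0, 1, 1] = 0 from by decide,
    show mult ![0, 0, 1, 0, 1, 0] ![0, 0, 1, 1, 1, 0] = 1 from by decide,
    show mult ![0, 0, 1, 1, 0, 0] ![2, 1, 0, 0, 0, 0] = 0 from by decide,
    show mult ![0, 0, 1, 1, 0, 0] ![2, 0, 1, 0, 0, 0] = 0 from by decide,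
    show mult ![0, 0, 1, 1, 0, 0] ![1, 1, 0, 1, 0, 0] = 0 from by decide,
    show mult ![0, 0, 1, 1, 0, 0] ![1, 1, 0, 0, 1, 0] = 0 from by decide,
    show mult ![0, 0, 1, 1, 0, 0] ![1, 0, 1, 0, 1, 0] = 0 from by decide,
    show mult ![0, 0, 1, 1, 0, 0] ![1, 0, 1, 0, 0, 1] = 0 from by decide,
    show mult ![0, 0, 1, 1, 0, 0] ![1, 0, 0, 1, 1, 0] = 0 from by decide,
    show mult ![0, 0, 1, 1, 0, 0] ![1, 0, 0, 0, 1, 1] = 0 from by decide,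
    show mult ![0, 0, 1, 1, 0, 0] ![0, 1, 1, 1, 0, 0] = 1 from by decide,
    show mult ![0, 0, 1, 1, 0, 0] ![0, 1, 1, 0, 0, 1] = 0 from by decide,
    show mult ![0, 0, 1, 1, 0, 0] ![0, 1, 0, 0, 1, 1] = 0 from by decide,
    show mult ![0, 0, 1, 1, 0, 0] ![0, 0, 1, 1, 1, 0] = 1 from by decide,
    show mult ![0, 1, 0, 0, 0, 0] ![2, 1, 0, 0, 0, 0] = 1 from by decide,
    show mult ![0, 1, 0, 0, 0, 0] ![2, 0, 1, 0, 0, 0] = 0 from by decide,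
    show mult ![0, 1, 0, 0, 0, 0] ![1, 1, 0, 1, 0, 0] = 1 from by decide,
    show mult ![0, 1, 0, 0, 0, 0] ![1, 1, 0, 0, 1, 0] = 1 from by decide,
    show mult ![0, 1, 0, 0, 0, 0] ![1, 0, 1, 0, 1, 0] = 0 from by decide,
    show mult ![0, 1, 0, 0, 0, 0] ![1, 0, 1, 0, 0, 1] = 0 from by decide,
    show mult ![0, 1, 0, 0, 0, 0] ![1, 0, 0, 1, 1, 0] = 0 from by decide,
    show mult ![0, 1, 0, 0, 0, 0] ![1, 0, 0, 0, 1, 1] = 0 from by decide,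
    show mult ![0, 1, 0, 0, 0, 0] ![0, 1, 1, 1, 0, 0] = 1 from by decide,
    show mult ![0, 1, 0, 0, 0, 0] ![0, 1, 1, 0, 0, 1] = 1 from by decide,
    show mult ![0, 1, 0, 0, 0, 0] ![0, 1, 0, 0, 1, 1] = 1 from by decide,
    show mult ![0, 1, 0, 0, 0, 0] ![0, 0, 1, 1, 1, 0] = 0 from by decide,
    show mult ![0, 1, 0, 0, 0, 1] ![2, 1, 0, 0, 0, 0] = 0 from by decide,
    show mult ![0, 1, 0, 0, 0, 1] ![2, 0, 1, 0, 0, 0] = 0 from by decide,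
    show mult ![0, 1, 0, 0, 0, 1] ![1, 1, 0, 1, 0, 0] = 0 from by decide,
    show mult ![0, 1, 0, 0, 0, 1] ![1, 1, 0, 0, 1, 0] = 0 from by decide,
    show mult ![0, 1, 0, 0, 0, 1] ![1, 0, 1, 0, 1, 0] = 0 from by decide,
    show mult ![0, 1, 0, 0, 0, 1] ![1, 0, 1, 0, 0, 1] = 0 from by decide,
    show mult ![0, 1, 0, 0, 0, 1] ![1, 0, 0, 1, 1, 0] = 0 from by decide,
    show mult ![0, 1, 0, 0, 0, 1] ![1, 0, 0, 0, 1, 1] = 0 from by decide,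
    show mult ![0, 1, 0, 0, 0, 1] ![0, 1, 1, 1, 0, 0] = 0 from by decide,
    show mult ![0, 1, 0, 0, 0, 1] ![0, 1, 1, 0, 0, 1] = 1 from by decide,
    show mult ![0, 1, 0, 0, 0, 1] ![0, 1, 0, 0, 1, 1] = 1 from by decide,
    show mult ![0, 1, 0, 0, 0, 1] ![0, 0, 1, 1, 1, 0] = 0 from by decide,
    show mult ![0, 1, 0, 0, 1, 0] ![2, 1, 0, 0, 0, 0] = 0 from by decide,
    show mult ![0, 1, 0, 0, 1, 0] ![2, 0, 1, 0, 0, 0] = 0 from by decide,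
    show mult ![0, 1, 0, 0, 1, 0] ![1, 1, 0, 1, 0, 0] = 0 from by decide,
    show mult ![0, 1, 0, 0, 1, 0] ![1, 1, 0, 0, 1, 0] = 1 from by decide,
    show mult ![0, 1, 0, 0, 1, 0] ![1, 0, 1, 0, 1, 0] = 0 from by decide,
    show mult ![0, 1, 0, 0, 1, 0] ![1, 0, 1, 0, 0, 1] = 0 from by decide,
    show mult ![0, 1, 0, 0, 1, 0] ![1, 0, 0, 1, 1, 0] = 0 from by decide,
    show mult ![0, 1, 0, 0, 1, 0] ![1, 0, 0, 0, 1, 1] = 0 from by decide,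
    show mult ![0, 1, 0, 0, 1, 0] ![0, 1, 1, 1, 0, 0] = 0 from by decide,
    show mult ![0, 1, 0, 0, 1, 0] ![0, 1, 1, 0, 0, 1] = 0 from by decide,
    show mult ![0, 1, 0, 0, 1, 0] ![0, 1, 0, 0, 1, 1] = 1 from by decide,
    show mult ![0, 1, 0, 0, 1, 0] ![0, 0, 1, 1, 1, 0] = 0 from by decide] at h1 h2 h3 h4 h5 h6 h7 h8 h9 h10 h11
  push_cast at h1 h2 h3 h4 h5 h6 h7 h8 h9 h10 h11
  refine ⟨w ![2, 1, 0, 0, 0, 0], fun σ hσ => ?_⟩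
  rw [mem_complexA_iff] at hσ
  rcases hσ with rfl|rfl|rfl|rfl|rfl|rfl|rfl|rfl|rfl|rfl|rfl|rfl
  · rw [w0eval1]; ring
  · rw [w0eval2]; linear_combination (-1 : K) * h1 + (-1 : K) * h2 + (2 : K) * h3 + (-1 : K) * h4 + (2 : K) * h5 + (1 : K) * h6 + (-1 : K) * h8 + (1 : K) * h9 + (-1 : K) * h10
  · rw [w0eval3]; linear_combination (-1 : K) * h2 + (1 : K) * h3 + (1 : K) * h5 + (1 : K) * h7 + (-1 : K) * h8 + (1 : K) * h9 + (-1 : K) * h10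
  · rw [w0eval4]; linear_combination (-1 : K) * h4 + (1 : K) * h5 + (1 : K) * h9 + (-1 : K) * h10
  · rw [w0eval5]; linear_combination (1 : K) * h2 + (-1 : K) * h3 + (1 : K) * h4 + (-2 : K) * h5 + (-1 : K) * h9 + (1 : K) * h10
  · rw [w0eval6]; linear_combination (1 : K) * h1 + (-1 : K) * h3 + (1 : K) * h4 + (-1 : K) * h5 + (-1 : K) * h9 + (1 : K) * h11
  · rw [w0eval7]; linear_combination (1 : K) * h2 + (-1 : K) * h3 + (1 : K) * h4 + (-1 : K) * h5 + (-1 : K) * h7 + (-1 : K) * h9 + (1 : K) * h10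
  · rw [w0eval8]; linear_combination (1 : K) * h3 + (-1 : K) * h4 + (1 : K) * h5 + (1 : K) * h9 + (-1 : K) * h10 + (-1 : K) * h11
  · rw [w0eval9]; linear_combination (1 : K) * h2 + (-1 : K) * h3 + (1 : K) * h4 + (-2 : K) * h5 + (-1 : K) * h7 + (1 : K) * h8 + (-1 : K) * h9 + (1 : K) * h10
  · rw [w0eval10]; linear_combination (-1 : K) * h4 + (1 : K) * h5 + (1 : K) * h9 + (-1 : K) * h11
  · rw [w0eval11]; linear_combination (1 : K) * h4 + (-1 : K) * h5 + (-1 : K) * h9 + (1 : K) * h10 + (1 : K) * h11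
  · rw [w0eval12]; linear_combination (-1 : K) * h2 + (1 : K) * h3 + (-1 : K) * h4 + (2 : K) * h5 + (1 : K) * h7 + (1 : K) * h9 + (-1 : K) * h10

/-- Over a characteristic-zero field `K`, the complex `𝒜` has a one-dimensional space
of `K`-balancings, spanned by the nondegenerate balancing `w₀`; in particular `𝒜` is
minimal (no nonempty proper subcomplex admits a nondegenerate balancing). -/
theorem complexA_balancings (K : Type*) [Field K] [CharZero K] :
    ((∀ σ ∈ complexA, w₀ K σ ≠ 0)
    ∧ (∀ S : Fin 6 → ℕ, ∑ i, S i ≤ 2 →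
        ∑ σ ∈ complexA, w₀ K σ * (mult S σ : K) = 0)
    ∧ (∀ w : (Fin 6 → ℕ) → K,
        (∀ S : Fin 6 → ℕ, ∑ i, S i ≤ 2 →
          ∑ σ ∈ complexA, w σ * (mult S σ : K) = 0) →
        ∃ c : K, ∀ σ ∈ complexA, w σ = c * w₀ K σ)
    ∧ (∀ Δ' : Finset (Fin 6 → ℕ), Δ' ⊂ complexA → Δ'.Nonempty →
        ¬ ∃ w' : (Fin 6 → ℕ) → K, (∀ σ ∈ Δ', w' σ ≠ 0) ∧
          ∀ S : Fin 6 → ℕ, ∑ i, S i ≤ 2 →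
            ∑ σ ∈ Δ', w' σ * (mult S σ : K) = 0)) := by
  have hnd : ∀ σ ∈ complexA, w₀ K σ ≠ 0 := by
    intro σ hσ
    rw [mem_complexA_iff] at hσ
    rcases hσ with rfl|rfl|rfl|rfl|rfl|rfl|rfl|rfl|rfl|rfl|rfl|rfl <;>
      simp only [w0eval1, w0eval2, w0eval3, w0eval4, w0eval5, w0eval6, w0eval7, w0eval8, w0eval9, w0eval10, w0eval11, w0eval12] <;> norm_num
  refine ⟨hnd, ?_, main_span K, ?_⟩
  · intro S hS
    have hS6 : S 0 + S 1 + S 2 + S 3 + S 4 + S 5 ≤ 2 := by rwa [Fin.sum_univ_six] at hS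
    have hSe : S = ![S 0, S 1, S 2, S 3, S 4, S 5] := by
      funext i; fin_cases i <;> rfl
    have hz := key_balance (S 0) (S 1) (S 2) (S 3) (S 4) (S 5) hS6
    rw [← hSe] at hz
    calc ∑ σ ∈ complexA, w₀ K σ * (mult S σ : K)
        = ((∑ σ ∈ complexA, w₀ℤ σ * (mult S σ : ℤ) : ℤ) : K) := by
          rw [Int.cast_sum]
          refine Finset.sum_congr rfl fun σ hσ => ?_
          push_cast
          rw [w₀_cast K σ hσ]
      _ = 0 := by rw [hz]; simp
  · intro Δ' hsub hne
    rintro ⟨w', hnz, hbal⟩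
    classical
    have hb : ∀ S : Fin 6 → ℕ, ∑ i, S i ≤ 2 →
        ∑ σ ∈ complexA, (if σ ∈ Δ' then w' σ else 0) * (mult S σ : K) = 0 := by
      intro S hS
      rw [← Finset.sum_subset hsub.subset (fun x _ hx => by simp [hx])]
      rw [← hbal S hS]
      exact Finset.sum_congr rfl fun x hx => by simp [hx]
    obtain ⟨c, hc⟩ := main_span K _ hb
    obtain ⟨τ, hτA, hτn⟩ := Finset.exists_of_ssubset hsub
    have hc0 : c = 0 := by
      have hτ := hc τ hτA
      rw [if_neg hτn] at hτ
      rcases mul_eq_zero.mp hτ.symm with h | h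
      · exact h
      · exact absurd h (hnd τ hτA)
    obtain ⟨σ0, hσ0⟩ := hne
    have hw0 : w' σ0 = 0 := by
      have h := hc σ0 (hsub.subset hσ0)
      rw [if_pos hσ0, hc0, zero_mul] at h
      exact h
    exact hnz σ0 hσ0 hw0
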